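/- For any programs P, Q over a finite universe U and alphabets H, B ⊆ U: P ≡_{⟨H,B⟩} Q holds if and only if P and Q have the same set of ⟨H,B⟩-models. -/

import Mathlib

structure Rule (α : Type*) where
  head : Finset α
  pbody : Finset α
  nbody : Finset α
deriving DecidableEq

abbrev Program (α : Type*) := Finset (Rule α)

variable {α : Type*} [DecidableEq α]

/-- An interpretation `Y` satisfies a rule. -/
def satRule (Y : Finset α) (r : Rule α) : Prop :=
  r.pbody ⊆ Y → r.nbody ∩ Y = ∅ → (r.head ∩ Y).Nonempty

/-- `Y` is a model of the program `P`. -/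
def satProg (Y : Finset α) (P : Program α) : Prop := ∀ r ∈ P, satRule Y r

/-- The Gelfond–Lifschitz reduct `P^Y`. -/
def reduct (P : Program α) (Y : Finset α) : Program α :=
  (P.filter (fun r => r.nbody ∩ Y = ∅)).image (fun r => ⟨r.head, r.pbody, ∅⟩)

/-- `Y` is an answer set of `P`: a minimal model of `P^Y`. -/
def isAS (P : Program α) (Y : Finset α) : Prop :=
  satProg Y (reduct P Y) ∧ ∀ Z, Z ⊂ Y → ¬ satProg Z (reduct P Y)

def heads (P : Program α) : Finset α := P.biUnion Rule.head
def bodies (P : Program α) : Finset α := P.biUnion (fun r => r.pbody ∪ r.nbody)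

/-- A positive program: no default negation. -/
def Positive (P : Program α) : Prop := ∀ r ∈ P, r.nbody = ∅

/-- A unary program: only facts `a ←` and rules `a ← b`. -/
def Unary (P : Program α) : Prop :=
  ∀ r ∈ P, r.nbody = ∅ ∧ r.head.card = 1 ∧ r.pbody.card ≤ 1

/-- Membership in the class `C_⟨H,B⟩`. -/
def inClass (H B : Finset α) (P : Program α) : Prop := heads P ⊆ H ∧ bodies P ⊆ B

/-- `V ⪯_H^B Z`. -/
def preceq (H B V Z : Finset α) : Prop := V ∩ H ⊆ Z ∩ H ∧ Z ∩ B ⊆ V ∩ B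

/-- `V ≺_H^B Z`. -/
def prec (H B V Z : Finset α) : Prop := preceq H B V Z ∧ V ∩ (H ∪ B) ≠ Z ∩ (H ∪ B)

/-- `Y` is an `H`-total model of `P`. -/
def Htotal (H : Finset α) (P : Program α) (Y : Finset α) : Prop :=
  satProg Y P ∧ ∀ Z, Z ⊂ Y → satProg Z (reduct P Y) → Z ∩ H ⊂ Y ∩ H

/-- The containment `P ⊆_⟨H,B⟩ Q`. -/
def containsHB (H B : Finset α) (P Q : Program α) : Prop :=
  ∀ R : Program α, inClass H B R → ∀ Y, isAS (P ∪ R) Y → isAS (Q ∪ R) Y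

/-- The equivalence `P ≡_⟨H,B⟩ Q`. -/
def equivHB (H B : Finset α) (P Q : Program α) : Prop :=
  ∀ R : Program α, inClass H B R → ∀ Y, isAS (P ∪ R) Y ↔ isAS (Q ∪ R) Y

/-- A witness against `P ⊆_⟨H,B⟩ Q`. -/
def Witness (H B : Finset α) (P Q : Program α) (X Y : Finset α) : Prop :=
  X ⊆ Y ∧ Htotal H P Y ∧
    (satProg Y Q → X ⊂ Y ∧ satProg X (reduct Q Y) ∧
      ∀ X', preceq H B X X' → X' ⊂ Y → ¬ satProg X' (reduct P Y))

/-- `(X,Y)` is `⪯_H^B`-maximal for `P`. -/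
def maximalHB (H B : Finset α) (P : Program α) (X Y : Finset α) : Prop :=
  satProg X (reduct P Y) ∧ ∀ X', prec H B X X' → X' ⊂ Y → ¬ satProg X' (reduct P Y)

/-- `(X,Y)` is an `⟨H,B⟩`-model of `P`. -/
def HBmodel (H B : Finset α) (P : Program α) (X Y : Finset α) : Prop :=
  X ⊆ Y ∧ Htotal H P Y ∧
    (X ⊂ Y → ∃ X', X' ⊂ Y ∧ X' ∩ (H ∪ B) = X ∧ maximalHB H B P X' Y)

/-!
Both directions rest on one family of positive programs in `C_⟨H,B⟩`: for `X ⊆ Y`, the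
separator consisting of the facts `X ∩ H` and the rules `a ← b` with `b ∈ (Y ∩ B) \ X` and
`a ∈ Y ∩ H`. It is satisfied by `X`, and every `Z ⊊ Y` satisfying it with `Z ∩ H ⊊ Y ∩ H` lies
`⪰_H^B`-above `X`. So if `(X, Y)` is maximal for `P`, then `Y` is not an answer set of
`P ∪ separator`, hence not of `Q ∪ separator`, and a witness for this lies below a `Q`-maximal
pair `X' ⪰ X`. If `X'` has another trace on `H ∪ B` than `X`, the same argument with `P` and `Q`
swapped gives a `P`-maximal pair with the trace of `X'`, strictly above `X`, contradicting the
maximality of `X`; the recursion terminates because `≺_H^B` is well-founded below `Y`.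
Conversely, a witness `Z` against `Y` being an answer set of `Q ∪ R` lies below a `Q`-maximal
pair, whose trace is an `⟨H,B⟩`-model of `Q`, hence of `P`, and the resulting `P`-maximal pair
refutes `Y` for `P ∪ R`, since satisfaction of `R^Y` is monotone along `⪯_H^B` when
`R ∈ C_⟨H,B⟩`.
-/

theorem Finset.singleton_inter_nonempty {a : α} {s : Finset α} :
    ({a} ∩ s).Nonempty ↔ a ∈ s := by
  rw [Finset.singleton_inter]
  split_ifs with h <;> simp [h]

section

open Finset

variable {H B X Y Z V W : Finset α} {P Q R : Program α}

theorem satProg_union : satProg Y (P ∪ Q) ↔ satProg Y P ∧ satProg Y Q := by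
  simp only [satProg, mem_union, or_imp, forall_and]

theorem reduct_union (P Q : Program α) (Y : Finset α) :
    reduct (P ∪ Q) Y = reduct P Y ∪ reduct Q Y := by
  simp only [reduct, filter_union, image_union]

theorem satProg_reduct_iff :
    satProg Z (reduct P Y) ↔
      ∀ r ∈ P, r.nbody ∩ Y = ∅ → r.pbody ⊆ Z → (r.head ∩ Z).Nonempty := by
  simp only [satProg, reduct, forall_mem_image, mem_filter, satRule, and_imp,
    empty_inter, forall_const]

theorem satProg_reduct_self : satProg Y (reduct P Y) ↔ satProg Y P := by
  rw [satProg_reduct_iff]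
  exact forall₂_congr fun _ _ => ⟨fun h hp hn => h hn hp, fun h hn hp => h hp hn⟩

theorem reduct_of_positive (hR : Positive R) (Y : Finset α) : reduct R Y = R := by
  ext ⟨h, p, n⟩
  simp only [reduct, mem_image, mem_filter]
  constructor
  · rintro ⟨r, ⟨hr, -⟩, hrr⟩
    rw [← hrr, ← hR r hr]
    exact hr
  · intro hr
    obtain rfl : n = ∅ := hR _ hr
    exact ⟨_, ⟨hr, empty_inter Y⟩, rfl⟩

theorem Positive.union (hP : Positive P) (hQ : Positive Q) : Positive (P ∪ Q) := by
  simpa only [Positive, mem_union, or_imp, forall_and] using ⟨hP, hQ⟩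

theorem satProg_reduct_union_of_positive (hR : Positive R) :
    satProg Z (reduct (P ∪ R) Y) ↔ satProg Z (reduct P Y) ∧ satProg Z R := by
  rw [reduct_union, satProg_union, reduct_of_positive hR]

theorem inClass.union (hP : inClass H B P) (hQ : inClass H B Q) : inClass H B (P ∪ Q) := by
  simp only [inClass, heads, bodies, union_biUnion, union_subset_iff] at *
  exact ⟨⟨hP.1, hQ.1⟩, hP.2, hQ.2⟩

theorem preceq_refl (H B V : Finset α) : preceq H B V V :=
  ⟨subset_rfl, subset_rfl⟩

theorem preceq.trans (h₁ : preceq H B X V) (h₂ : preceq H B V W) : preceq H B X W :=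
  ⟨h₁.1.trans h₂.1, h₂.2.trans h₁.2⟩

theorem preceq_inter_union_right : preceq H B V (W ∩ (H ∪ B)) ↔ preceq H B V W := by
  simp only [preceq, inter_assoc, union_inter_cancel_left,
    union_inter_cancel_right]

theorem preceq_congr_right (h : W ∩ (H ∪ B) = X ∩ (H ∪ B)) :
    preceq H B V W ↔ preceq H B V X := by
  rw [← preceq_inter_union_right, h, preceq_inter_union_right]

theorem prec_congr_right (h : W ∩ (H ∪ B) = X ∩ (H ∪ B)) : prec H B V W ↔ prec H B V X := by
  rw [prec, prec, preceq_congr_right h, h]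

def precRank (H B Y V : Finset α) : ℕ := ((Y ∩ H) \ V).card + (V ∩ B).card

theorem precRank_lt_of_prec (hWY : W ⊆ Y) (h : prec H B V W) :
    precRank H B Y W < precRank H B Y V := by
  obtain ⟨⟨hH, hB⟩, hne⟩ := h
  have hsdiff : (Y ∩ H) \ W ⊆ (Y ∩ H) \ V := fun a ha => by
    simp only [mem_sdiff, mem_inter] at ha ⊢
    exact ⟨ha.1, fun haV => ha.2 (mem_inter.1 (hH (mem_inter.2 ⟨haV, ha.1.2⟩))).1⟩
  unfold precRank
  by_cases hVW : V ∩ H = W ∩ H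
  · have hB' : W ∩ B ⊂ V ∩ B := hB.ssubset_of_ne fun e => hne <| by
      rw [inter_union_distrib_left, inter_union_distrib_left, hVW, e]
    exact Nat.add_lt_add_of_le_of_lt (card_le_card hsdiff) (card_lt_card hB')
  · obtain ⟨a, haW, haV⟩ := exists_of_ssubset (hH.ssubset_of_ne hVW)
    obtain ⟨haW, haH⟩ := mem_inter.1 haW
    have haYV : a ∈ (Y ∩ H) \ V := mem_sdiff.2
      ⟨mem_inter.2 ⟨hWY haW, haH⟩, fun haV' => haV (mem_inter.2 ⟨haV', haH⟩)⟩
    have hsdiff' : (Y ∩ H) \ W ⊂ (Y ∩ H) \ V :=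
      (ssubset_iff_of_subset hsdiff).2 ⟨a, haYV, fun h => (mem_sdiff.1 h).2 haW⟩
    exact Nat.add_lt_add_of_lt_of_le (card_lt_card hsdiff') (card_le_card hB)

theorem exists_maximalHB (hZY : Z ⊂ Y) (hZ : satProg Z (reduct P Y)) :
    ∃ X, preceq H B Z X ∧ X ⊂ Y ∧ maximalHB H B P X Y := by
  classical
  let S := Y.powerset.filter fun V => preceq H B Z V ∧ V ⊂ Y ∧ satProg V (reduct P Y)
  have mem_S {V} : V ⊂ Y → preceq H B Z V → satProg V (reduct P Y) → V ∈ S := fun hVY hZV hV =>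
    mem_filter.2 ⟨mem_powerset.2 hVY.subset, hZV, hVY, hV⟩
  obtain ⟨X, hXS, hXmin⟩ :=
    S.exists_min_image (precRank H B Y) ⟨Z, mem_S hZY (preceq_refl H B Z) hZ⟩
  obtain ⟨-, hZX, hXY, hX⟩ := mem_filter.1 hXS
  refine ⟨X, hZX, hXY, hX, fun X' hXX' hX'Y hX' => ?_⟩
  have := hXmin X' (mem_S hX'Y (hZX.trans hXX'.1) hX')
  exact (precRank_lt_of_prec hX'Y.subset hXX').not_ge this

theorem satProg_reduct_of_preceq (hR : inClass H B R) (hZW : preceq H B Z W)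
    (hZ : satProg Z (reduct R Y)) : satProg W (reduct R Y) := by
  rw [satProg_reduct_iff] at hZ ⊢
  intro r hr hn hpW
  have hpB : r.pbody ⊆ B := fun a ha =>
    hR.2 (mem_biUnion.2 ⟨r, hr, mem_union_left _ ha⟩)
  have hpZ : r.pbody ⊆ Z := fun a ha =>
    (mem_inter.1 (hZW.2 (mem_inter.2 ⟨hpW ha, hpB ha⟩))).1
  obtain ⟨a, ha⟩ := hZ r hr hn hpZ
  obtain ⟨hah, haZ⟩ := mem_inter.1 ha
  have haH : a ∈ H := hR.1 (mem_biUnion.2 ⟨r, hr, hah⟩)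
  exact ⟨a, mem_inter.2 ⟨hah, (mem_inter.1 (hZW.1 (mem_inter.2 ⟨haZ, haH⟩))).1⟩⟩

theorem htotal_of_isAS_union (hR : inClass H B R) (h : isAS (P ∪ R) Y) : Htotal H P Y := by
  rw [isAS, reduct_union, satProg_union] at h
  obtain ⟨⟨hYP, hYR⟩, hmin⟩ := h
  refine ⟨satProg_reduct_self.1 hYP, fun Z hZY hZ => ?_⟩
  have hZH : Z ∩ H ⊆ Y ∩ H := inter_subset_inter_right hZY.subset
  have hYZ (e : Z ∩ H = Y ∩ H) : preceq H B Y Z := ⟨e.ge, inter_subset_inter_right hZY.subset⟩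
  exact hZH.ssubset_of_ne fun e => hmin Z hZY <|
    satProg_union.2 ⟨hZ, satProg_reduct_of_preceq hR (hYZ e) hYR⟩

def facts (S : Finset α) : Program α := S.image fun a => ⟨{a}, ∅, ∅⟩

def implications (S T : Finset α) : Program α := (S ×ˢ T).image fun p => ⟨{p.2}, {p.1}, ∅⟩

theorem positive_facts (S : Finset α) : Positive (facts S) := by
  simp only [Positive, facts, forall_mem_image, implies_true]

theorem positive_implications (S T : Finset α) : Positive (implications S T) := by
  simp only [Positive, implications, forall_mem_image, implies_true]

theorem satProg_facts {S : Finset α} : satProg Z (facts S) ↔ S ⊆ Z := by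
  simp only [satProg, facts, forall_mem_image, satRule, empty_subset,
    empty_inter, forall_const, singleton_inter_nonempty]
  rfl

theorem satProg_implications {S T : Finset α} :
    satProg Z (implications S T) ↔ ∀ b ∈ S, b ∈ Z → T ⊆ Z := by
  simp only [satProg, implications, forall_mem_image, mem_product, Prod.forall,
    satRule, singleton_subset_iff, empty_inter, forall_const,
    singleton_inter_nonempty, and_imp]
  exact ⟨fun h b hb hbZ a ha => h b a hb ha hbZ, fun h b a hb ha hbZ => h b hb hbZ ha⟩

theorem inClass_facts {S : Finset α} (hS : S ⊆ H) : inClass H B (facts S) := by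
  simp only [inClass, heads, bodies, facts, image_biUnion, biUnion_subset,
    singleton_subset_iff, union_empty, empty_subset, implies_true, and_true]
  exact hS

theorem inClass_implications {S T : Finset α} (hS : S ⊆ B) (hT : T ⊆ H) :
    inClass H B (implications S T) := by
  simp only [inClass, heads, bodies, implications, image_biUnion, biUnion_subset,
    mem_product, Prod.forall, singleton_subset_iff, union_empty, and_imp]
  exact ⟨fun _ _ _ ha => hT ha, fun _ _ hb _ => hS hb⟩

def separator (H B Y X : Finset α) : Program α :=
  facts (X ∩ H) ∪ implications ((Y ∩ B) \ X) (Y ∩ H)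

theorem positive_separator : Positive (separator H B Y X) :=
  (positive_facts _).union (positive_implications _ _)

theorem inClass_separator : inClass H B (separator H B Y X) :=
  (inClass_facts inter_subset_right).union
    (inClass_implications (sdiff_subset.trans inter_subset_right)
      inter_subset_right)

theorem satProg_separator_iff :
    satProg Z (separator H B Y X) ↔ X ∩ H ⊆ Z ∧ ∀ b ∈ (Y ∩ B) \ X, b ∈ Z → Y ∩ H ⊆ Z := by
  rw [separator, satProg_union, satProg_facts, satProg_implications]

theorem satProg_separator_self : satProg X (separator H B Y X) :=
  satProg_separator_iff.2 ⟨inter_subset_left, fun _ hb hbX => absurd hbX (mem_sdiff.1 hb).2⟩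

theorem satProg_separator_of_subset (hXY : X ⊆ Y) : satProg Y (separator H B Y X) :=
  satProg_separator_iff.2 ⟨inter_subset_left.trans hXY, fun _ _ _ => inter_subset_left⟩

theorem preceq_of_satProg_separator (hZY : Z ⊆ Y) (hZH : Z ∩ H ⊂ Y ∩ H)
    (hZ : satProg Z (separator H B Y X)) : preceq H B X Z := by
  obtain ⟨hXZ, himp⟩ := satProg_separator_iff.1 hZ
  refine ⟨subset_inter hXZ inter_subset_right, fun b hb => ?_⟩
  obtain ⟨hbZ, hbB⟩ := mem_inter.1 hb
  by_contra hbX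
  have hbX : b ∉ X := fun h => hbX (mem_inter.2 ⟨h, hbB⟩)
  have hYZ := himp b (mem_sdiff.2 ⟨mem_inter.2 ⟨hZY hbZ, hbB⟩, hbX⟩) hbZ
  exact hZH.2 (subset_inter hYZ inter_subset_right)

theorem isAS_union_facts (h : Htotal H P Y) : isAS (P ∪ facts (Y ∩ H)) Y := by
  refine ⟨?_, fun Z hZY hZ => ?_⟩
  · rw [satProg_reduct_self, satProg_union, satProg_facts]
    exact ⟨h.1, inter_subset_left⟩
  · rw [satProg_reduct_union_of_positive (positive_facts _), satProg_facts] at hZ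
    exact (h.2 Z hZY hZ.1).2 (subset_inter hZ.2 inter_subset_right)

theorem equivHB.symm (h : equivHB H B P Q) : equivHB H B Q P :=
  fun R hR Y => (h R hR Y).symm

theorem Htotal.of_equivHB (heq : equivHB H B P Q) (h : Htotal H P Y) : Htotal H Q Y :=
  have hR : inClass H B (facts (Y ∩ H)) := inClass_facts inter_subset_right
  htotal_of_isAS_union hR ((heq _ hR Y).1 (isAS_union_facts h))

theorem exists_maximalHB_preceq_of_equivHB (heq : equivHB H B P Q) (hQ : Htotal H Q Y)
    (hXY : X ⊂ Y) (hX : maximalHB H B P X Y) :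
    ∃ X', preceq H B X X' ∧ X' ⊂ Y ∧ maximalHB H B Q X' Y := by
  have hnot : ¬ isAS (Q ∪ separator H B Y X) Y := fun hAS =>
    ((heq _ inClass_separator Y).2 hAS).2 X hXY <|
      (satProg_reduct_union_of_positive positive_separator).2 ⟨hX.1, satProg_separator_self⟩
  have hY : satProg Y (reduct (Q ∪ separator H B Y X) Y) :=
    satProg_reduct_self.2 <| satProg_union.2 ⟨hQ.1, satProg_separator_of_subset hXY.subset⟩
  obtain ⟨Z, hZY, hZ⟩ : ∃ Z ⊂ Y, satProg Z (reduct (Q ∪ separator H B Y X) Y) := by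
    by_contra! h
    exact hnot ⟨hY, h⟩
  rw [satProg_reduct_union_of_positive positive_separator] at hZ
  obtain ⟨X', hZX', hX'Y, hX'⟩ := exists_maximalHB hZY hZ.1
  exact ⟨X', (preceq_of_satProg_separator hZY.subset (hQ.2 Z hZY hZ.1) hZ.2).trans hZX', hX'Y, hX'⟩

theorem exists_maximalHB_of_equivHB (heq : equivHB H B P Q) (hP : Htotal H P Y)
    (hXY : X ⊂ Y) (hX : maximalHB H B P X Y) :
    ∃ X', X' ⊂ Y ∧ X' ∩ (H ∪ B) = X ∩ (H ∪ B) ∧ maximalHB H B Q X' Y := by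
  induction hn : precRank H B Y X using Nat.strong_induction_on generalizing P Q X with
  | _ n ih =>
  have hQ := hP.of_equivHB heq
  obtain ⟨X', hXX', hX'Y, hX'⟩ := exists_maximalHB_preceq_of_equivHB heq hQ hXY hX
  by_cases htr : X' ∩ (H ∪ B) = X ∩ (H ∪ B)
  · exact ⟨X', hX'Y, htr, hX'⟩
  have hprec : prec H B X X' := ⟨hXX', Ne.symm htr⟩
  obtain ⟨X'', hX''Y, hX''tr, hX''⟩ :=
    ih _ (hn ▸ precRank_lt_of_prec hX'Y.subset hprec) heq.symm hQ hX'Y hX' rfl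
  exact absurd hX''.1 (hX.2 X'' ((prec_congr_right hX''tr).2 hprec) hX''Y)

theorem HBmodel.of_equivHB (heq : equivHB H B P Q) (h : HBmodel H B P X Y) :
    HBmodel H B Q X Y := by
  obtain ⟨hXY, hP, hmax⟩ := h
  refine ⟨hXY, hP.of_equivHB heq, fun hXY' => ?_⟩
  obtain ⟨X', hX'Y, rfl, hX'⟩ := hmax hXY'
  exact exists_maximalHB_of_equivHB heq hP hX'Y hX'

theorem HBmodel.of_maximalHB (hP : Htotal H P Y) (hXY : X ⊂ Y) (hX : maximalHB H B P X Y) :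
    HBmodel H B P (X ∩ (H ∪ B)) Y :=
  ⟨inter_subset_left.trans hXY.subset, hP, fun _ => ⟨X, hXY, rfl, hX⟩⟩

theorem isAS_union_of_HBmodel_iff (hmod : ∀ X Y, HBmodel H B P X Y ↔ HBmodel H B Q X Y)
    (hR : inClass H B R) (h : isAS (P ∪ R) Y) : isAS (Q ∪ R) Y := by
  have hP := htotal_of_isAS_union hR h
  have hQ : Htotal H Q Y :=
    ((hmod Y Y).1 ⟨subset_rfl, hP, fun hYY => absurd hYY (ssubset_irrefl Y)⟩).2.1
  obtain ⟨hY, hmin⟩ := h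
  simp only [isAS, reduct_union, satProg_union] at hY hmin ⊢
  refine ⟨⟨satProg_reduct_self.2 hQ.1, hY.2⟩, fun Z hZY hZ => ?_⟩
  obtain ⟨X, hZX, hXY, hX⟩ := exists_maximalHB hZY hZ.1
  obtain ⟨-, -, hmax⟩ := (hmod _ Y).2 (HBmodel.of_maximalHB hQ hXY hX)
  obtain ⟨X', hX'Y, hX'tr, hX'⟩ := hmax (inter_subset_left.trans_ssubset hXY)
  exact hmin X' hX'Y
    ⟨hX'.1, satProg_reduct_of_preceq hR ((preceq_congr_right hX'tr).2 hZX) hZ.2⟩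

end

theorem central_theorem_general (P Q : Program α) (H B : Finset α) :
    equivHB H B P Q ↔ ∀ X Y, HBmodel H B P X Y ↔ HBmodel H B Q X Y :=
  ⟨fun heq _ _ => ⟨HBmodel.of_equivHB heq, HBmodel.of_equivHB heq.symm⟩,
    fun hmod _ hR _ => ⟨isAS_union_of_HBmodel_iff hmod hR,
      isAS_union_of_HBmodel_iff (fun X Y => (hmod X Y).symm) hR⟩⟩

theorem central_theorem [Fintype α] (P Q : Program α) (H B : Finset α) :
    equivHB H B P Q ↔ ∀ X Y, HBmodel H B P X Y ↔ HBmodel H B Q X Y :=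
  central_theorem_general P Q H B
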